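/- arXiv:2011.07149 — 3 statements merged into one kernel-verified Lean document; each statement's English description precedes it below -/
import Mathlib

section
/- Under the same assumptions as above (finite state set S, every state has a nonempty set of enabled observations, every state can reach the accepting set Sf), the constrained observation set O^C_s := {o ∈ O_s : δ^C(s,o) ≠ ∅} is nonempty for every s ∈ S, where δ^C(s,o) keeps only successors s' ∈ δ(s,o) satisfying: if s ∉ Sf then d(s') < d(s), and if s ∈ Sf then d(s') equals the minimum of d over all successors of s. -/
/-- Lengths of paths from `s` to the accepting set `Sf`. -/
def distSet {S O : Type*} (δ : S → O → Set S) (Sf : Set S) (s : S) : Set ℕ :=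
  {n | ∃ f : ℕ → S, f 0 = s ∧ f n ∈ Sf ∧ ∀ k < n, ∃ o : O, f (k + 1) ∈ δ (f k) o}

/-- Minimum shortest-path distance from `s` to the accepting set `Sf`. -/
noncomputable def graphDist {S O : Type*} (δ : S → O → Set S) (Sf : Set S) (s : S) : ℕ :=
  sInf (distSet δ Sf s)

/-- Enabled observations at `s`. -/
def Os {S O : Type*} (δ : S → O → Set S) (s : S) : Set O := {o | (δ s o).Nonempty}

/-- Constrained transition map: keep only successors that decrease the distance
to `Sf` when `s ∉ Sf`, and successors minimizing the distance among all
successors when `s ∈ Sf`. -/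
noncomputable def δC {S O : Type*} (δ : S → O → Set S) (Sf : Set S) (s : S) (o : O) : Set S :=
  {s' ∈ δ s o |
    (s ∉ Sf → graphDist δ Sf s' < graphDist δ Sf s) ∧
    (s ∈ Sf → graphDist δ Sf s' =
      sInf {m : ℕ | ∃ (o' : O) (t : S), t ∈ δ s o' ∧ graphDist δ Sf t = m})}

/-- Constrained enabled observations at `s`. -/
noncomputable def OCs {S O : Type*} (δ : S → O → Set S) (Sf : Set S) (s : S) : Set O :=
  {o ∈ Os δ s | (δC δ Sf s o).Nonempty}

theorem stmt1 {S O : Type*} [Fintype S] [Fintype O]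
    (δ : S → O → Set S) (Sf : Set S)
    (henabled : ∀ s : S, ∃ o : O, (δ s o).Nonempty)
    (hreach : ∀ s : S, (distSet δ Sf s).Nonempty) :
    ∀ s : S, (OCs δ Sf s).Nonempty := by
  intro s
  by_cases hs : s ∈ Sf
  · have hM : {m : ℕ | ∃ (o' : O) (t : S), t ∈ δ s o' ∧ graphDist δ Sf t = m}.Nonempty := by
      obtain ⟨o, t, ht⟩ := henabled s
      exact ⟨graphDist δ Sf t, o, t, ht, rfl⟩
    obtain ⟨o', t, ht, hdt⟩ := Nat.sInf_mem hM
    exact ⟨o', ⟨t, ht⟩, t, ht, fun h => absurd hs h, fun _ => hdt⟩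
  · have hmem : graphDist δ Sf s ∈ distSet δ Sf s := Nat.sInf_mem (hreach s)
    obtain ⟨f, hf0, hfn, hstep⟩ := hmem
    set n := graphDist δ Sf s with hn
    have hpos : 0 < n := by
      rcases Nat.eq_zero_or_pos n with h | h
      · exfalso; apply hs; rw [← hf0]; rw [h] at hfn; exact hfn
      · exact h
    obtain ⟨o, ho⟩ := hstep 0 hpos
    rw [hf0] at ho
    refine ⟨o, ⟨f 1, ho⟩, f 1, ho, fun _ => ?_, fun h => absurd h hs⟩
    have hmem1 : n - 1 ∈ distSet δ Sf (f 1) := by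
      refine ⟨fun k => f (k + 1), rfl, ?_, ?_⟩
      · have h1 : n - 1 + 1 = n := Nat.succ_pred_eq_of_pos hpos
        simpa [h1] using hfn
      · intro k hk
        exact hstep (k + 1) (by omega)
    have := Nat.sInf_le hmem1
    have : graphDist δ Sf (f 1) ≤ n - 1 := this
    omega
end

section
/- Let V : ℝⁿ → ℝ≥0 satisfy along a hybrid arc φ: during flow d/dt V(φ(t,j)) ≤ λc V(φ(t,j)), and across jumps V(φ(t,j+1)) ≤ e^{λd} V(φ(t,j)), for constants λc, λd ∈ ℝ. Then V(φ(t,j)) ≤ e^{λc t + λd j} V(φ(0,0)) for all (t,j) ∈ dom φ. -/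
/-!
Along each flow interval `v` satisfies `v' ≤ λc v`, so by Grönwall's inequality a bound of the
form `e^{λc τ + d} C` at the left end of the interval persists up to its right end. Each jump
multiplies the bound by at most `e^{λd}`, which turns `d = λd j` into `λd (j + 1)`; induction on
the jump index gives the bound at every jump time, and one more flow step covers the whole domain.
-/

open Set Real

theorem le_mul_exp_of_hasDerivWithinAt_le_mul {f f' : ℝ → ℝ} {K a b : ℝ}
    (h : ∀ x ∈ Icc a b, HasDerivWithinAt f (f' x) (Icc a b) x ∧ f' x ≤ K * f x) :
    ∀ x ∈ Icc a b, f x ≤ f a * exp (K * (x - a)) := by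
  have hcont : ContinuousOn f (Icc a b) := fun x hx => (h x hx).1.continuousWithinAt
  have hderiv : ∀ x ∈ Ico a b, HasDerivWithinAt f (f' x) (Ici x) x := fun x hx =>
    (h x (Ico_subset_Icc_self hx)).1.mono_of_mem_nhdsWithin (Icc_mem_nhdsGE_of_mem hx)
  intro x hx
  simpa [gronwallBound_ε0] using
    le_gronwallBound_of_liminf_deriv_right_le (ε := 0) hcont
      (fun x hx _ hr => (hderiv x hx).liminf_right_slope_le hr) le_rfl
      (fun x hx => by simpa using (h x (Ico_subset_Icc_self hx)).2) x hx

theorem le_exp_add_mul_of_hasDerivWithinAt_le_mul {f f' : ℝ → ℝ} {K a b d c : ℝ}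
    (h : ∀ x ∈ Icc a b, HasDerivWithinAt f (f' x) (Icc a b) x ∧ f' x ≤ K * f x)
    (ha : f a ≤ exp (K * a + d) * c) :
    ∀ x ∈ Icc a b, f x ≤ exp (K * x + d) * c := by
  intro x hx
  calc f x ≤ f a * exp (K * (x - a)) := le_mul_exp_of_hasDerivWithinAt_le_mul h x hx
    _ ≤ exp (K * a + d) * c * exp (K * (x - a)) := by gcongr
    _ = exp (K * x + d) * c := by rw [mul_right_comm, ← exp_add]; ring_nf

theorem le_exp_mul_at_jump_times (t : ℕ → ℝ) (ht : Monotone t) (ht0 : t 0 = 0)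
    (v v' : ℝ → ℕ → ℝ) (lc ld : ℝ)
    (hflow : ∀ j, ∀ τ ∈ Icc (t j) (t (j + 1)),
      HasDerivWithinAt (fun σ => v σ j) (v' τ j) (Icc (t j) (t (j + 1))) τ ∧
      v' τ j ≤ lc * v τ j)
    (hjump : ∀ j, v (t (j + 1)) (j + 1) ≤ exp ld * v (t (j + 1)) j) :
    ∀ j, v (t j) j ≤ exp (lc * t j + ld * j) * v 0 0
  | 0 => by simp [ht0]
  | j + 1 => by
    have hflowEnd : v (t (j + 1)) j ≤ exp (lc * t (j + 1) + ld * j) * v 0 0 :=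
      le_exp_add_mul_of_hasDerivWithinAt_le_mul (hflow j)
        (le_exp_mul_at_jump_times t ht ht0 v v' lc ld hflow hjump j) _ ⟨ht j.le_succ, le_rfl⟩
    calc v (t (j + 1)) (j + 1) ≤ exp ld * v (t (j + 1)) j := hjump j
      _ ≤ exp ld * (exp (lc * t (j + 1) + ld * j) * v 0 0) := by gcongr
      _ = exp (lc * t (j + 1) + ld * ↑(j + 1)) * v 0 0 := by
        rw [← mul_assoc, ← exp_add]; push_cast; ring_nf

theorem stmt8_general (t : ℕ → ℝ) (ht : Monotone t) (ht0 : t 0 = 0)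
    (v : ℝ → ℕ → ℝ) (v' : ℝ → ℕ → ℝ) (lc ld : ℝ)
    (hflow : ∀ j, ∀ τ ∈ Icc (t j) (t (j + 1)),
      HasDerivWithinAt (fun σ => v σ j) (v' τ j) (Icc (t j) (t (j + 1))) τ ∧
      v' τ j ≤ lc * v τ j)
    (hjump : ∀ j, v (t (j + 1)) (j + 1) ≤ Real.exp ld * v (t (j + 1)) j) :
    ∀ j, ∀ τ ∈ Icc (t j) (t (j + 1)),
      v τ j ≤ Real.exp (lc * τ + ld * j) * v 0 0 := fun j =>
  le_exp_add_mul_of_hasDerivWithinAt_le_mul (hflow j)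
    (le_exp_mul_at_jump_times t ht ht0 v v' lc ld hflow hjump j)

/-- Exponential bound along a hybrid arc: if `v τ j = V(φ(τ,j))` satisfies
`d/dτ v ≤ λc v` during flow and `v ≤ e^{λd} v⁻` across jumps, then
`v(τ,j) ≤ e^{λc τ + λd j} v(0,0)` on the hybrid time domain. -/
theorem stmt8 (t : ℕ → ℝ) (ht : Monotone t) (ht0 : t 0 = 0)
    (v : ℝ → ℕ → ℝ) (v' : ℝ → ℕ → ℝ) (lc ld : ℝ)
    (hnonneg : ∀ j, ∀ τ ∈ Icc (t j) (t (j + 1)), 0 ≤ v τ j)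
    (hflow : ∀ j, ∀ τ ∈ Icc (t j) (t (j + 1)),
      HasDerivWithinAt (fun σ => v σ j) (v' τ j) (Icc (t j) (t (j + 1))) τ ∧
      v' τ j ≤ lc * v τ j)
    (hjump : ∀ j, v (t (j + 1)) (j + 1) ≤ Real.exp ld * v (t (j + 1)) j) :
    ∀ j, ∀ τ ∈ Icc (t j) (t (j + 1)),
      v τ j ≤ Real.exp (lc * τ + ld * j) * v 0 0 :=
  stmt8_general t ht ht0 v v' lc ld hflow hjump
end

section
/- Suppose V : ℝⁿ → ℝ≥0 satisfies along each solution φ of a restricted hybrid system: V(φ(t,j)) ≤ e^{λc t + λd j} V(φ(0,0)), and moreover for all (t,j) ∈ dom φ, λc t + λd j ≤ M − γ(t+j) with constants γ > 0, M > 0. Assume V(φ(0,0)) ≤ V_u and V(φ(t,j)) ≥ V_l > 0 for all (t,j) ∈ dom φ. Then sup{t+j : (t,j) ∈ dom φ} ≤ (M + log V_u − log V_l)/γ. -/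
open Real

lemma log_sub_log_le_of_le_exp_mul {a b x : ℝ} (ha : 0 < a) (hb : 0 < b)
    (h : a ≤ exp x * b) : log a - log b ≤ x := by
  rw [← log_div ha.ne' hb.ne', log_le_iff_le_exp (div_pos ha hb), div_le_iff₀ hb]
  exact h

lemma le_div_of_le_exp_sub_mul {s M γ a b : ℝ} (hγ : 0 < γ) (ha : 0 < a) (hb : 0 < b)
    (h : a ≤ exp (M - γ * s) * b) : s ≤ (M + log b - log a) / γ := by
  have := log_sub_log_le_of_le_exp_mul ha hb h
  rw [le_div_iff₀ hγ]
  linarith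

theorem stmt9_general (Dφ : Set (ℝ × ℕ)) (w : ℝ × ℕ → ℝ) (w0 : ℝ)
    (lc ld M γ Vu Vl : ℝ)
    (hγ : 0 < γ) (hVl : 0 < Vl) (hVu : 0 < Vu)
    (hbound : ∀ p ∈ Dφ, w p ≤ Real.exp (lc * p.1 + ld * p.2) * w0)
    (hlin : ∀ p ∈ Dφ, lc * p.1 + ld * p.2 ≤ M - γ * (p.1 + p.2))
    (hu : w0 ≤ Vu)
    (hl : ∀ p ∈ Dφ, Vl ≤ w p) :
    ∀ p ∈ Dφ, p.1 + (p.2 : ℝ) ≤ (M + Real.log Vu - Real.log Vl) / γ := by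
  intro p hp
  have hVl_le : Vl ≤ exp (lc * p.1 + ld * p.2) * w0 := (hl p hp).trans (hbound p hp)
  have hw0 : 0 < w0 := pos_of_mul_pos_right (hVl.trans_le hVl_le) (exp_pos _).le
  refine le_div_of_le_exp_sub_mul hγ hVl hVu (hVl_le.trans ?_)
  exact mul_le_mul (exp_le_exp.mpr (hlin p hp)) hu hw0.le (exp_pos _).le

/-- Quantitative step for uniform global recurrence: the exponential bound
together with the linear hybrid-time inequality and uniform bounds `V_l ≤ V ≤
e^{...} V_u` force a uniform bound on the hybrid time `t + j`. -/
theorem stmt9 (Dφ : Set (ℝ × ℕ)) (w : ℝ × ℕ → ℝ) (w0 : ℝ)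
    (lc ld M γ Vu Vl : ℝ)
    (hγ : 0 < γ) (hM : 0 < M) (hVl : 0 < Vl) (hVu : 0 < Vu)
    (hbound : ∀ p ∈ Dφ, w p ≤ Real.exp (lc * p.1 + ld * p.2) * w0)
    (hlin : ∀ p ∈ Dφ, lc * p.1 + ld * p.2 ≤ M - γ * (p.1 + p.2))
    (hu : w0 ≤ Vu)
    (hl : ∀ p ∈ Dφ, Vl ≤ w p) :
    ∀ p ∈ Dφ, p.1 + (p.2 : ℝ) ≤ (M + Real.log Vu - Real.log Vl) / γ :=
  stmt9_general Dφ w w0 lc ld M γ Vu Vl hγ hVl hVu hbound hlin hu hl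
end
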